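/- Let (X_k) be a sequence of nonempty metric spaces and let Y be a nonempty metric space such that d̂(X_k, Y) → 0 as k → ∞. If every X_k is a separable metric space, then Y is separable. -/

import Mathlib

/-!
A quasi-isometry `g : Y → X` followed by `f : X → Y` moves each point of `Y` by at most `C`,
so the `f`-image of a countable dense subset of a separable `X` is a countable
`(A η + B + C)`-net of `Y`. Along a sequence `X k → Y` the constants of the quasi-isometries
tend to zero, so `Y` has countable `ε`-nets for every `ε > 0` and is therefore separable.
-/

open ENNReal

/-- `f` is an `(A,B)`-quasi-isometric embedding. -/
def QIEmb {X Y : Type*} [MetricSpace X] [MetricSpace Y] (A B : ℝ) (f : X → Y) : Prop :=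
  ∀ x x' : X, (1 / A) * dist x x' - B ≤ dist (f x) (f x') ∧
    dist (f x) (f x') ≤ A * dist x x' + B

/-- `X` and `Y` are `(A,B,C)`-quasi-isometric. -/
def QuasiIsometric (X Y : Type*) [MetricSpace X] [MetricSpace Y] (A B C : ℝ) : Prop :=
  ∃ (f : X → Y) (g : Y → X), QIEmb A B f ∧ QIEmb A B g ∧
    (∀ x : X, dist (g (f x)) x ≤ C) ∧ (∀ y : Y, dist (f (g y)) y ≤ C)

/-- The quasi-isometric distance `d̂`. -/
noncomputable def qiDist (X Y : Type*) [MetricSpace X] [MetricSpace Y] : ℝ≥0∞ :=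
  sInf {e : ℝ≥0∞ | ∃ r : ℝ, 0 < r ∧ e = ENNReal.ofReal r ∧ QuasiIsometric X Y (1 + r) r r}

open Filter TopologicalSpace

theorem QuasiIsometric.exists_countable_net {X Y : Type*} [MetricSpace X] [MetricSpace Y]
    [SeparableSpace X] {A B C : ℝ} (h : QuasiIsometric X Y A B C) (hA : 0 ≤ A) {η : ℝ}
    (hη : 0 < η) : ∃ S : Set Y, S.Countable ∧ ∀ y, ∃ s ∈ S, dist y s ≤ A * η + B + C := by
  obtain ⟨f, g, hf, -, -, hfg⟩ := h
  obtain ⟨D, hD_countable, hD_dense⟩ := exists_countable_dense X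
  refine ⟨f '' D, hD_countable.image f, fun y => ?_⟩
  obtain ⟨d, hdD, hgyd⟩ := Metric.mem_closure_iff.mp (hD_dense (g y)) η hη
  refine ⟨f d, Set.mem_image_of_mem f hdD, ?_⟩
  calc dist y (f d) ≤ dist (f (g y)) y + dist (f (g y)) (f d) := dist_triangle_left _ _ _
    _ ≤ C + (A * dist (g y) d + B) := add_le_add (hfg y) (hf _ _).2
    _ ≤ A * η + B + C := by nlinarith

theorem exists_quasiIsometric_of_qiDist_lt {X Y : Type*} [MetricSpace X] [MetricSpace Y]
    {δ : ℝ} (h : qiDist X Y < ENNReal.ofReal δ) :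
    ∃ r : ℝ, 0 < r ∧ r < δ ∧ QuasiIsometric X Y (1 + r) r r := by
  obtain ⟨_, ⟨r, hr, rfl, hQI⟩, hrδ⟩ := sInf_lt_iff.mp h
  exact ⟨r, hr, (ENNReal.ofReal_lt_ofReal_iff_of_nonneg hr.le).mp hrδ, hQI⟩

theorem separable_of_qi_limit_general
    (X : ℕ → Type*) [∀ k, MetricSpace (X k)]
    (Y : Type*) [MetricSpace Y]
    (hconv : Tendsto (fun k => qiDist (X k) Y) atTop (nhds 0))
    (hsep : ∀ k, TopologicalSpace.SeparableSpace (X k)) :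
    TopologicalSpace.SeparableSpace Y := by
  have : SecondCountableTopology Y := Metric.secondCountable_of_almost_dense_set fun ε hε => by
    have hδ : (0 : ℝ≥0∞) < ENNReal.ofReal (min (ε / 4) 1) := by simp [hε]
    obtain ⟨k, hk⟩ := (hconv.eventually_lt_const hδ).exists
    obtain ⟨r, hr, hrδ, hQI⟩ := exists_quasiIsometric_of_qiDist_lt hk
    have := hsep k
    obtain ⟨S, hS, hS_net⟩ := hQI.exists_countable_net (by linarith) hr
    refine ⟨S, hS, fun y => ?_⟩
    obtain ⟨s, hs, hys⟩ := hS_net y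
    have hr1 : r < 1 := hrδ.trans_le (min_le_right _ _)
    have hrε : r < ε / 4 := hrδ.trans_le (min_le_left _ _)
    exact ⟨s, hs, hys.trans (by nlinarith)⟩
  infer_instance

/-- Separability is inherited by quasi-isometric limits. -/
theorem separable_of_qi_limit
    (X : ℕ → Type*) [∀ k, MetricSpace (X k)] [∀ k, Nonempty (X k)]
    (Y : Type*) [MetricSpace Y] [Nonempty Y]
    (hconv : Tendsto (fun k => qiDist (X k) Y) atTop (nhds 0))
    (hsep : ∀ k, TopologicalSpace.SeparableSpace (X k)) :
    TopologicalSpace.SeparableSpace Y :=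
  separable_of_qi_limit_general X Y hconv hsep
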